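/- arXiv:2309.16504 — 4 statements merged into one kernel-verified Lean document; each statement's English description precedes it below -/
import Mathlib

section
/- Let d ≥ 1 and j ≥ 2 be integers and let σ be a real number with σ < -d/2. Then there exists a constant C > 0 such that for every function c : ℤ^d → [0,∞), the (possibly infinite) sum ∑_{n ∈ ℤ^d} ⟨n⟩^{2σ} ∑_{(n_1,…,n_j) ∈ (ℤ^d)^j, n_1+⋯+n_j = n} c_{n_1}^2 ⋯ c_{n_j}^2 is at most C · (∑_{n ∈ ℤ^d} c_n^{2j/(j-1)})^{(j-1)}. -/
open scoped ENNReal NNReal BigOperators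
open scoped Classical

/-- The Japanese bracket `⟨n⟩ = (1 + |n|²)^{1/2}` of a lattice point `n ∈ ℤ^d`,
where `|n|` is the Euclidean norm. -/
noncomputable def jpn {d : ℕ} (n : Fin d → ℤ) : ℝ :=
  Real.sqrt (1 + ∑ i, ((n i : ℝ)) ^ 2)

/-!
For fixed `n`, the bound `∏ₗ aₗ ≤ ∑ₗ ∏_{k ≠ l} aₖ ^ (j/(j-1))` splits the sum over
`n₁ + ⋯ + n_j = n` into `j` sums, in each of which one variable is determined by the others;
dropping the constraint bounds each of them by `(∑ₘ cₘ ^ (2j/(j-1))) ^ (j-1)`, uniformly in `n`.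
Summing against `⟨n⟩^{2σ}` then costs the factor `∑ₙ ⟨n⟩^{2σ}`, which is finite for `σ < -d/2`
by comparison with `∏ᵢ (1 + nᵢ²) ^ (σ/d)`.
-/

open Finset

namespace ENNReal

theorem tsum_fin_prod_eq_pow {G : Type*} (f : G → ℝ≥0∞) :
    ∀ n : ℕ, ∑' u : Fin n → G, ∏ i, f (u i) = (∑' m, f m) ^ n
  | 0 => by simp
  | n + 1 => by
    rw [← (Fin.consEquiv fun _ => G).tsum_eq, ENNReal.tsum_prod', pow_succ',
      ← ENNReal.tsum_mul_right]
    refine tsum_congr fun x => ?_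
    simp only [Fin.consEquiv_apply, Fin.prod_univ_succ, Fin.cons_zero, Fin.cons_succ,
      ENNReal.tsum_mul_left, tsum_fin_prod_eq_pow f n]

theorem tsum_pi_prod_eq_pow {ι G : Type*} [Fintype ι] (f : G → ℝ≥0∞) :
    ∑' u : ι → G, ∏ i, f (u i) = (∑' m, f m) ^ Fintype.card ι := by
  rw [← tsum_fin_prod_eq_pow, ← ((Fintype.equivFin ι).arrowCongr (Equiv.refl G)).tsum_eq]
  refine tsum_congr fun u => ?_
  exact ((Fintype.equivFin ι).symm.prod_comp fun i => f (u i)).symm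

/-- At a smallest factor `a m` one has `a m ^ (N-1) ≤ ∏_{k ≠ m} a k`, so the product is at most the
`m`-th summand. -/
theorem prod_le_sum_prod_erase_rpow {ι : Type*} [Fintype ι] [DecidableEq ι]
    (hι : 1 < Fintype.card ι) (a : ι → ℝ≥0∞) :
    ∏ l, a l ≤ ∑ l, ∏ k ∈ univ.erase l,
      a k ^ ((Fintype.card ι : ℝ) / (Fintype.card ι - 1)) := by
  set N := Fintype.card ι
  have hq : (0 : ℝ) < N - 1 := by
    have : (1 : ℝ) < N := by exact_mod_cast hι
    linarith
  have : Nonempty ι := Fintype.card_pos_iff.mp (by omega)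
  have hexp : (N : ℝ) / (N - 1) = (N - 1 : ℝ)⁻¹ + 1 := by field_simp; ring
  obtain ⟨m, -, hmin⟩ := univ.exists_min_image a univ_nonempty
  have ham : a m ≤ ∏ k ∈ univ.erase m, a k ^ (N - 1 : ℝ)⁻¹ := by
    rw [ENNReal.prod_rpow_of_nonneg (inv_nonneg.mpr hq.le), ENNReal.le_rpow_inv_iff hq]
    calc a m ^ (N - 1 : ℝ) = ∏ _k ∈ univ.erase m, a m := by
          rw [prod_const, card_erase_of_mem (mem_univ m), card_univ, ← ENNReal.rpow_natCast,
            Nat.cast_sub hι.le, Nat.cast_one]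
      _ ≤ ∏ k ∈ univ.erase m, a k := prod_le_prod' fun k _ => hmin k (mem_univ k)
  calc ∏ l, a l = a m * ∏ k ∈ univ.erase m, a k := (mul_prod_erase univ a (mem_univ m)).symm
    _ ≤ (∏ k ∈ univ.erase m, a k ^ (N - 1 : ℝ)⁻¹) * ∏ k ∈ univ.erase m, a k := by gcongr
    _ = ∏ k ∈ univ.erase m, a k ^ ((N : ℝ) / (N - 1)) := by
      rw [← prod_mul_distrib]
      refine prod_congr rfl fun k _ => ?_
      rw [hexp, ENNReal.rpow_add_of_nonneg _ _ (inv_nonneg.mpr hq.le) zero_le_one,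
        ENNReal.rpow_one]
    _ ≤ ∑ l, ∏ k ∈ univ.erase l, a k ^ ((N : ℝ) / (N - 1)) :=
      single_le_sum (f := fun l => ∏ k ∈ univ.erase l, a k ^ ((N : ℝ) / (N - 1)))
        (fun _ _ => zero_le) (mem_univ m)

end ENNReal

def sumFiber (ι : Type*) {G : Type*} [Fintype ι] [AddCommMonoid G] (n : G) : Set (ι → G) :=
  {v | ∑ k, v k = n}

theorem tsum_sumFiber_prod_erase_le {ι G : Type*} [Fintype ι] [DecidableEq ι] [AddCommGroup G]
    (g : G → ℝ≥0∞) (n : G) (l : ι) :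
    ∑' v : (sumFiber ι n), ∏ k ∈ univ.erase l, g (v.1 k)
      ≤ (∑' m, g m) ^ (Fintype.card ι - 1) := by
  let restrict (v : sumFiber ι n) : univ.erase l → G := fun k => v.1 k
  have hrestrict : Function.Injective restrict := by
    intro v w hvw
    have h_off : ∀ k ∈ univ.erase l, v.1 k = w.1 k := fun k hk => congrFun hvw ⟨k, hk⟩
    have h_at : v.1 l = w.1 l := by
      rw [← add_right_cancel_iff (a := ∑ k ∈ univ.erase l, v.1 k), add_sum_erase _ _ (mem_univ l),
        sum_congr rfl h_off, add_sum_erase _ _ (mem_univ l), v.2, w.2]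
    refine Subtype.ext (funext fun k => ?_)
    by_cases hk : k = l
    · rw [hk, h_at]
    · exact h_off k (mem_erase.mpr ⟨hk, mem_univ k⟩)
  calc ∑' v : (sumFiber ι n), ∏ k ∈ univ.erase l, g (v.1 k)
      = ∑' v : (sumFiber ι n), ∏ k : univ.erase l, g (restrict v k) :=
        tsum_congr fun v => (prod_coe_sort _ _).symm
    _ ≤ ∑' u : (univ.erase l → G), ∏ k, g (u k) :=
        ENNReal.tsum_comp_le_tsum_of_injective hrestrict fun u => ∏ k, g (u k)
    _ = (∑' m, g m) ^ (Fintype.card ι - 1) := by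
        rw [ENNReal.tsum_pi_prod_eq_pow, Fintype.card_coe, card_erase_of_mem (mem_univ l),
          card_univ]

theorem tsum_ite_sum_eq_prod_le {ι G : Type*} [Fintype ι] [DecidableEq ι] [AddCommGroup G]
    [DecidableEq G] (hι : 1 < Fintype.card ι) (a : G → ℝ≥0∞) (n : G) :
    ∑' v : ι → G, (if ∑ l, v l = n then ∏ l, a (v l) else 0)
      ≤ Fintype.card ι * (∑' m, a m ^ ((Fintype.card ι : ℝ) / (Fintype.card ι - 1)))
          ^ (Fintype.card ι - 1) := by
  set r : ℝ := (Fintype.card ι : ℝ) / (Fintype.card ι - 1)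
  calc ∑' v : ι → G, (if ∑ l, v l = n then ∏ l, a (v l) else 0)
      = ∑' v : (sumFiber ι n), ∏ l, a (v.1 l) := by
        rw [_root_.tsum_subtype (sumFiber ι n) fun v => ∏ l, a (v l)]
        simp only [Set.indicator_apply, sumFiber, Set.mem_ofPred_eq]
    _ ≤ ∑' v : (sumFiber ι n), ∑ l, ∏ k ∈ univ.erase l, a (v.1 k) ^ r :=
        ENNReal.tsum_le_tsum fun v => ENNReal.prod_le_sum_prod_erase_rpow hι _
    _ = ∑ l, ∑' v : (sumFiber ι n), ∏ k ∈ univ.erase l, a (v.1 k) ^ r :=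
        Summable.tsum_finsetSum fun _ _ => ENNReal.summable
    _ ≤ ∑ _l : ι, (∑' m, a m ^ r) ^ (Fintype.card ι - 1) :=
        sum_le_sum fun l _ => tsum_sumFiber_prod_erase_le (fun m => a m ^ r) n l
    _ = Fintype.card ι * (∑' m, a m ^ r) ^ (Fintype.card ι - 1) := by
        rw [sum_const, card_univ, nsmul_eq_mul]

theorem summable_one_add_sq_int_rpow {t : ℝ} (ht : t < -(1 / 2)) :
    Summable fun m : ℤ => (1 + (m : ℝ) ^ 2) ^ t := by
  have hbound (m : ℤ) (hm : m ≠ 0) : ‖(1 + (m : ℝ) ^ 2) ^ t‖ ≤ |(m : ℝ)| ^ (-(-(2 * t))) := by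
    have hpos : (0 : ℝ) < (m : ℝ) ^ 2 := by positivity
    rw [neg_neg, Real.norm_of_nonneg (by positivity), Real.rpow_mul (abs_nonneg _), Real.rpow_two,
      sq_abs]
    exact Real.rpow_le_rpow_of_nonpos hpos (by linarith) (by linarith)
  exact .of_norm_bounded_eventually (Real.summable_abs_int_rpow (by linarith))
    ((Filter.eventually_cofinite_ne 0).mono hbound)

theorem one_add_sum_sq_rpow_le_prod {d : ℕ} (hd : d ≠ 0) {σ : ℝ} (hσ : σ ≤ 0) (x : Fin d → ℝ) :
    (1 + ∑ i, x i ^ 2) ^ σ ≤ ∏ i, (1 + x i ^ 2) ^ (σ / d) := by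
  have hσd : σ / d ≤ 0 := div_nonpos_of_nonpos_of_nonneg hσ (Nat.cast_nonneg d)
  calc (1 + ∑ i, x i ^ 2) ^ σ = ∏ _i : Fin d, (1 + ∑ i, x i ^ 2) ^ (σ / d) := by
        rw [prod_const, card_univ, Fintype.card_fin, ← Real.rpow_mul_natCast (by positivity),
          div_mul_cancel₀ _ (Nat.cast_ne_zero.mpr hd)]
    _ ≤ ∏ i, (1 + x i ^ 2) ^ (σ / d) := by
        refine prod_le_prod (fun _ _ => by positivity) fun i _ => ?_
        refine Real.rpow_le_rpow_of_nonpos (by positivity) ?_ hσd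
        have := single_le_sum (f := fun k => x k ^ 2) (fun k _ => sq_nonneg (x k)) (mem_univ i)
        linarith

theorem jpn_rpow_two_mul {d : ℕ} (n : Fin d → ℤ) (σ : ℝ) :
    jpn n ^ (2 * σ) = (1 + ∑ i, (n i : ℝ) ^ 2) ^ σ := by
  rw [jpn, Real.sqrt_eq_rpow, ← Real.rpow_mul (by positivity)]
  ring_nf

theorem tsum_ofReal_jpn_rpow_ne_top {d : ℕ} {σ : ℝ} (hσ : σ < -(d : ℝ) / 2) :
    ∑' n : Fin d → ℤ, ENNReal.ofReal (jpn n ^ (2 * σ)) ≠ ⊤ := by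
  rcases Nat.eq_zero_or_pos d with rfl | hd
  · simp
  have hd' : (0 : ℝ) < d := Nat.cast_pos.mpr hd
  have ht : σ / d < -(1 / 2) := by
    rw [div_lt_iff₀ hd']
    linarith
  have h1 : ∑' m : ℤ, ENNReal.ofReal ((1 + (m : ℝ) ^ 2) ^ (σ / d)) ≠ ⊤ := by
    rw [← ENNReal.ofReal_tsum_of_nonneg (fun m => by positivity) (summable_one_add_sq_int_rpow ht)]
    exact ENNReal.ofReal_ne_top
  refine ne_top_of_le_ne_top (ENNReal.pow_ne_top (n := d) h1) ?_
  calc ∑' n : Fin d → ℤ, ENNReal.ofReal (jpn n ^ (2 * σ))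
      ≤ ∑' n : Fin d → ℤ, ∏ i, ENNReal.ofReal ((1 + (n i : ℝ) ^ 2) ^ (σ / d)) := by
        refine ENNReal.tsum_le_tsum fun n => ?_
        rw [← ENNReal.ofReal_prod_of_nonneg fun i _ => by positivity, jpn_rpow_two_mul]
        exact ENNReal.ofReal_le_ofReal
          (one_add_sum_sq_rpow_le_prod hd.ne' (by linarith) fun i => (n i : ℝ))
    _ = (∑' m : ℤ, ENNReal.ofReal ((1 + (m : ℝ) ^ 2) ^ (σ / d))) ^ d := by
        rw [ENNReal.tsum_pi_prod_eq_pow fun m : ℤ => ENNReal.ofReal ((1 + (m : ℝ) ^ 2) ^ (σ / d)),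
          Fintype.card_fin]

theorem stmt1_general (d j : ℕ) (hj : 2 ≤ j) (σ : ℝ)
    (hσ : σ < -(d : ℝ) / 2) :
    ∃ C : ℝ, 0 < C ∧ ∀ c : (Fin d → ℤ) → ℝ≥0,
      (∑' n : Fin d → ℤ, ENNReal.ofReal (jpn n ^ (2 * σ)) *
        ∑' v : Fin j → (Fin d → ℤ),
          (if (∑ l, v l) = n then ∏ l, ((c (v l) : ℝ≥0∞)) ^ 2 else 0))
      ≤ ENNReal.ofReal C *
          (∑' n : Fin d → ℤ,
            ((c n : ℝ≥0∞)) ^ (2 * (j : ℝ) / ((j : ℝ) - 1))) ^ (j - 1) := by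
  set W := ∑' n : Fin d → ℤ, ENNReal.ofReal (jpn n ^ (2 * σ))
  have hW : W ≠ ⊤ := tsum_ofReal_jpn_rpow_ne_top hσ
  refine ⟨j * W.toReal + 1, by positivity, fun c => ?_⟩
  set A := ∑' n : Fin d → ℤ, (c n : ℝ≥0∞) ^ (2 * (j : ℝ) / ((j : ℝ) - 1))
  have hfiber (n : Fin d → ℤ) :
      ∑' v : Fin j → (Fin d → ℤ), (if ∑ l, v l = n then ∏ l, (c (v l) : ℝ≥0∞) ^ 2 else 0)
        ≤ j * A ^ (j - 1) := by
    have hpow (m : Fin d → ℤ) :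
        ((c m : ℝ≥0∞) ^ 2) ^ ((j : ℝ) / (j - 1)) = (c m : ℝ≥0∞) ^ (2 * (j : ℝ) / (j - 1)) := by
      rw [← ENNReal.rpow_natCast, ← ENNReal.rpow_mul, Nat.cast_ofNat, mul_div_assoc]
    have h := tsum_ite_sum_eq_prod_le (ι := Fin j) (by rw [Fintype.card_fin]; omega)
      (fun m => (c m : ℝ≥0∞) ^ 2) n
    simp only [Fintype.card_fin, hpow] at h
    exact h
  have hWj : W * j ≤ ENNReal.ofReal (j * W.toReal + 1) := by
    rw [← ENNReal.ofReal_toReal hW, ← ENNReal.ofReal_natCast, ← ENNReal.ofReal_mul (by positivity),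
      ENNReal.toReal_ofReal (by positivity), mul_comm]
    exact ENNReal.ofReal_le_ofReal (by linarith)
  calc ∑' n : Fin d → ℤ, ENNReal.ofReal (jpn n ^ (2 * σ)) *
        ∑' v : Fin j → (Fin d → ℤ), (if ∑ l, v l = n then ∏ l, (c (v l) : ℝ≥0∞) ^ 2 else 0)
      ≤ ∑' n : Fin d → ℤ, ENNReal.ofReal (jpn n ^ (2 * σ)) * (j * A ^ (j - 1)) :=
        ENNReal.tsum_le_tsum fun n => mul_le_mul_right (hfiber n) _
    _ = W * j * A ^ (j - 1) := by rw [ENNReal.tsum_mul_right, mul_assoc]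
    _ ≤ ENNReal.ofReal (j * W.toReal + 1) * A ^ (j - 1) := by gcongr

/-- for `σ < -d/2`, the weighted `j`-fold autocorrelation sum is bounded by
`C ‖c‖_{ℓ^{2j/(j-1)}}^{2j} = C (∑ c_n^{2j/(j-1)})^{j-1}`. -/
theorem stmt1 (d j : ℕ) (hd : 1 ≤ d) (hj : 2 ≤ j) (σ : ℝ)
    (hσ : σ < -(d : ℝ) / 2) :
    ∃ C : ℝ, 0 < C ∧ ∀ c : (Fin d → ℤ) → ℝ≥0,
      (∑' n : Fin d → ℤ, ENNReal.ofReal (jpn n ^ (2 * σ)) *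
        ∑' v : Fin j → (Fin d → ℤ),
          (if (∑ l, v l) = n then ∏ l, ((c (v l) : ℝ≥0∞)) ^ 2 else 0))
      ≤ ENNReal.ofReal C *
          (∑' n : Fin d → ℤ,
            ((c n : ℝ≥0∞)) ^ (2 * (j : ℝ) / ((j : ℝ) - 1))) ^ (j - 1) :=
  stmt1_general d j hj σ hσ
end

section
/- Fix integers d ≥ 1 and j ≥ 2, and let a : ℤ^d → [0,∞) be the counterexample sequence: a_n = ã_{n⁽¹⁾}⋯ã_{n⁽ᵈ⁾}, where ã_k = m^{-(j-1)/(2j)} if |k| = 2^m for some integer m ≥ 1 and ã_k = 0 otherwise. Then for every real s < 0, the sum ∑_{n ∈ ℤ^d} ⟨n⟩^{2s} a_n^2 is finite. -/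
open scoped ENNReal NNReal BigOperators
open scoped Classical

/-- The one-dimensional building block of the counterexample sequence:
`ã_k = m^{-(j-1)/(2j)}` if `|k| = 2^m` for some integer `m ≥ 1`, and `ã_k = 0` otherwise. -/
noncomputable def atil (j : ℕ) (k : ℤ) : ℝ :=
  if ∃ m : ℕ, 1 ≤ m ∧ k.natAbs = 2 ^ m then
    (Nat.log 2 k.natAbs : ℝ) ^ (-(((j : ℝ) - 1) / (2 * (j : ℝ))))
  else 0

/-- The counterexample sequence `a_n = ã_{n⁽¹⁾} ⋯ ã_{n⁽ᵈ⁾}` on `ℤ^d`. -/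
noncomputable def aseq (j d : ℕ) (n : Fin d → ℤ) : ℝ :=
  ∏ i, atil j (n i)

/-
Since `0 ≤ ã_k ≤ 1`, the logarithmic decay of `ã` plays no role: the sum is finite because `ã` is
supported on the lacunary set `{±2^m}`.
Splitting `⟨n⟩^{2s} ≤ ∏ᵢ (1 + (n⁽ⁱ⁾)²)^{s/d}`, the `d`-dimensional sum is dominated by the `d`-th
power of a one-dimensional sum, which in turn is at most twice the geometric series
`∑ₘ (4^{s/d})^m`.
-/

open Function

lemma ENNReal.tsum_fin_pi_prod {α : Type*} (g : α → ℝ≥0∞) (d : ℕ) :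
    ∑' n : Fin d → α, ∏ i, g (n i) = (∑' a, g a) ^ d := by
  induction d with
  | zero => simp
  | succ d ih =>
    rw [← (Fin.consEquiv fun _ : Fin (d + 1) => α).tsum_eq]
    simp only [Fin.consEquiv_apply, Fin.prod_univ_succ, Fin.cons_zero, Fin.cons_succ]
    rw [ENNReal.tsum_prod (f := fun a (b : Fin d → α) => g a * ∏ i, g (b i))]
    simp only [ENNReal.tsum_mul_left, ih, ENNReal.tsum_mul_right, pow_succ']

lemma ENNReal.tsum_int_natAbs_le (G : ℕ → ℝ≥0∞) :
    ∑' k : ℤ, G k.natAbs ≤ 2 * ∑' n, G n := by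
  rw [tsum_of_nat_of_neg_add_one ENNReal.summable ENNReal.summable, two_mul]
  have h_neg : ∀ n : ℕ, (-((n : ℤ) + 1)).natAbs = n + 1 := fun n => by omega
  simp only [Int.natAbs_natCast, h_neg]
  exact add_le_add le_rfl (ENNReal.tsum_comp_le_tsum_of_injective (add_left_injective 1) G)

lemma ENNReal.tsum_eq_tsum_pow_of_support_subset {b : ℕ} (hb : 2 ≤ b) {G : ℕ → ℝ≥0∞}
    (hG : support G ⊆ Set.range (b ^ ·)) : ∑' n, G n = ∑' m, G (b ^ m) :=
  ((Nat.pow_right_injective hb).tsum_eq hG).symm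

lemma Finset.prod_one_add_sq_le {ι : Type*} (s : Finset ι) (x : ι → ℝ) :
    ∏ i ∈ s, (1 + x i ^ 2) ≤ (1 + ∑ i ∈ s, x i ^ 2) ^ s.card := by
  rw [← Finset.prod_const]
  gcongr with i hi
  exact Finset.single_le_sum (fun i _ => sq_nonneg (x i)) hi

lemma jpn_rpow_le_prod {d : ℕ} (hd : 0 < d) (n : Fin d → ℤ) {s : ℝ} (hs : s ≤ 0) :
    jpn n ^ (2 * s) ≤ ∏ i, (1 + (n i : ℝ) ^ 2) ^ (s / d) := by
  set X : ℝ := 1 + ∑ i, (n i : ℝ) ^ 2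
  have hX : 0 < X := by positivity
  have hjpn : jpn n ^ (2 * s) = (X ^ d) ^ (s / d) := by
    rw [jpn, Real.sqrt_eq_rpow, ← Real.rpow_mul hX.le, ← Real.rpow_natCast,
      ← Real.rpow_mul hX.le]
    field_simp
  rw [hjpn, Real.finsetProd_rpow _ _ (fun i _ => by positivity)]
  refine Real.rpow_le_rpow_of_nonpos (by positivity) ?_
    (div_nonpos_of_nonpos_of_nonneg hs d.cast_nonneg)
  simpa using Finset.univ.prod_one_add_sq_le fun i => (n i : ℝ)

lemma atil_nonneg (j : ℕ) (k : ℤ) : 0 ≤ atil j k := by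
  unfold atil
  split_ifs <;> positivity

lemma atil_le_one {j : ℕ} (hj : 1 ≤ j) (k : ℤ) : atil j k ≤ 1 := by
  unfold atil
  split_ifs with h
  · obtain ⟨m, hm, hk⟩ := h
    have hj' : (1 : ℝ) ≤ j := by exact_mod_cast hj
    apply Real.rpow_le_one_of_one_le_of_nonpos
    · rw [hk, Nat.log_pow (by norm_num)]
      exact_mod_cast hm
    · have : 0 ≤ ((j : ℝ) - 1) / (2 * j) := by positivity
      linarith
  · exact zero_le_one

lemma atil_natAbs (j : ℕ) (k : ℤ) : atil j k.natAbs = atil j k := by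
  simp only [atil, Int.natAbs_natCast]

lemma atil_natCast_support_subset (j : ℕ) :
    support (fun n : ℕ => atil j n) ⊆ Set.range (2 ^ ·) := by
  intro n hn
  simp only [mem_support, atil, Int.natAbs_natCast, ne_eq, ite_eq_right_iff, not_forall] at hn
  obtain ⟨⟨m, -, rfl⟩, -⟩ := hn
  exact ⟨m, rfl⟩

lemma one_add_sq_rpow_mul_atil_sq_le {j : ℕ} (hj : 1 ≤ j) {t : ℝ} (ht : t ≤ 0) (m : ℕ) :
    (1 + ((2 ^ m : ℕ) : ℝ) ^ 2) ^ t * atil j (2 ^ m : ℕ) ^ 2 ≤ ((4 : ℝ) ^ t) ^ m := by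
  have h4 : ((2 ^ m : ℕ) : ℝ) ^ 2 = (4 : ℝ) ^ m := by
    rw [Nat.cast_pow, ← pow_mul, mul_comm, pow_mul]
    norm_num
  calc (1 + ((2 ^ m : ℕ) : ℝ) ^ 2) ^ t * atil j (2 ^ m : ℕ) ^ 2
      ≤ (1 + ((2 ^ m : ℕ) : ℝ) ^ 2) ^ t :=
        mul_le_of_le_one_right (by positivity) (pow_le_one₀ (atil_nonneg _ _) (atil_le_one hj _))
    _ ≤ ((4 : ℝ) ^ m) ^ t := by
        rw [h4]
        exact Real.rpow_le_rpow_of_nonpos (by positivity) (by linarith) ht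
    _ = ((4 : ℝ) ^ t) ^ m := (Real.rpow_pow_comm (by norm_num) t m).symm

lemma tsum_one_add_sq_rpow_mul_atil_sq_lt_top {j : ℕ} (hj : 1 ≤ j) {t : ℝ} (ht : t < 0) :
    ∑' k : ℤ, ENNReal.ofReal ((1 + (k : ℝ) ^ 2) ^ t * atil j k ^ 2) < ⊤ := by
  set G : ℕ → ℝ≥0∞ := fun n => ENNReal.ofReal ((1 + (n : ℝ) ^ 2) ^ t * atil j n ^ 2)
  have hG_natAbs (k : ℤ) :
      G k.natAbs = ENNReal.ofReal ((1 + (k : ℝ) ^ 2) ^ t * atil j k ^ 2) := by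
    simp only [G, atil_natAbs]
    simp only [Nat.cast_natAbs, Int.cast_abs, sq_abs]
  have hG_support : support G ⊆ Set.range (2 ^ ·) := fun n hn =>
    atil_natCast_support_subset j fun h => hn (by simp [G, h])
  set q : ℝ≥0∞ := ENNReal.ofReal ((4 : ℝ) ^ t)
  have hq : q < 1 := ENNReal.ofReal_lt_one.mpr (Real.rpow_lt_one_of_one_lt_of_neg (by norm_num) ht)
  have hG_le (m : ℕ) : G (2 ^ m) ≤ q ^ m := by
    rw [← ENNReal.ofReal_pow (by positivity)]
    exact ENNReal.ofReal_le_ofReal (one_add_sq_rpow_mul_atil_sq_le hj ht.le m)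
  calc ∑' k : ℤ, ENNReal.ofReal ((1 + (k : ℝ) ^ 2) ^ t * atil j k ^ 2)
      = ∑' k : ℤ, G k.natAbs := by simp only [hG_natAbs]
    _ ≤ 2 * ∑' n, G n := ENNReal.tsum_int_natAbs_le G
    _ = 2 * ∑' m, G (2 ^ m) := by
        rw [ENNReal.tsum_eq_tsum_pow_of_support_subset le_rfl hG_support]
    _ ≤ 2 * ∑' m, q ^ m := by gcongr with m; exact hG_le m
    _ < ⊤ := by
        rw [ENNReal.tsum_geometric]
        exact ENNReal.mul_lt_top (by norm_num) (ENNReal.inv_lt_top.mpr (tsub_pos_of_lt hq))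

lemma ofReal_jpn_rpow_mul_aseq_sq_le {d : ℕ} (hd : 0 < d) (j : ℕ) {s : ℝ} (hs : s ≤ 0)
    (n : Fin d → ℤ) :
    ENNReal.ofReal (jpn n ^ (2 * s) * aseq j d n ^ 2) ≤
      ∏ i, ENNReal.ofReal ((1 + (n i : ℝ) ^ 2) ^ (s / d) * atil j (n i) ^ 2) := by
  rw [← ENNReal.ofReal_prod_of_nonneg (fun i _ => by positivity)]
  apply ENNReal.ofReal_le_ofReal
  rw [Finset.prod_mul_distrib, aseq, ← Finset.prod_pow]
  gcongr
  exact jpn_rpow_le_prod hd n hs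

/-- the counterexample initial data belongs to `H^s(𝕋^d)` for every `s < 0`:
`∑_{n ∈ ℤ^d} ⟨n⟩^{2s} a_n^2 < ∞`. -/
theorem stmt4 (d j : ℕ) (hd : 1 ≤ d) (hj : 2 ≤ j) (s : ℝ) (hs : s < 0) :
    (∑' n : Fin d → ℤ,
      ENNReal.ofReal (jpn n ^ (2 * s) * (aseq j d n) ^ 2)) < ⊤ := by
  set g : ℤ → ℝ≥0∞ := fun k => ENNReal.ofReal ((1 + (k : ℝ) ^ 2) ^ (s / d) * atil j k ^ 2)
  have ht : s / d < 0 := div_neg_of_neg_of_pos hs (by exact_mod_cast hd)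
  calc (∑' n : Fin d → ℤ, ENNReal.ofReal (jpn n ^ (2 * s) * (aseq j d n) ^ 2))
      ≤ ∑' n : Fin d → ℤ, ∏ i, g (n i) :=
        ENNReal.tsum_le_tsum (ofReal_jpn_rpow_mul_aseq_sq_le hd j hs.le)
    _ = (∑' k, g k) ^ d := ENNReal.tsum_fin_pi_prod g d
    _ < ⊤ := ENNReal.pow_lt_top (tsum_one_add_sq_rpow_mul_atil_sq_lt_top (by omega) ht)
end

section
/- Let d ≥ 1 and j ≥ 2 be integers and let α be a real number with 2j(1+α) ≤ (j-1)d. Then the sum ∑ ⟨n_1⟩^{-2(1+α)} ⋯ ⟨n_j⟩^{-2(1+α)}, taken over all tuples (n_1, …, n_j) ∈ (ℤ^d)^j with n_1 + n_2 + ⋯ + n_j = 0, diverges (equals +∞). -/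
open scoped ENNReal NNReal BigOperators
open scoped Classical

/-!
Eliminate the constraint by taking `n_j = -(n_1 + ⋯ + n_{j-1})` with `n_1, …, n_{j-1}` free.
Restricted to the dyadic shell where every coordinate of `n_1, …, n_{j-1}` lies in
`[2^k, 2^{k+1})`, all `j` brackets are `≲ 2^k`, so the shell contributes at least
`2^{k(j-1)d} · 2^{-2kj(1+α)} ≳ 1` when `2j(1+α) ≤ (j-1)d`. The shells are disjoint, so the sum
diverges. (For `1 + α < 0` the same bound holds with `1 + α` replaced by `0`, since `⟨n⟩ ≥ 1`.)
-/

open Finset Function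

theorem ENNReal.tsum_eq_top_of_pairwise_disjoint {α : Type*} {f : α → ℝ≥0∞}
    {s : ℕ → Finset α} (hs : Pairwise (Disjoint on s)) {ε : ℝ≥0∞} (hε : ε ≠ 0)
    (h : ∀ k, ε ≤ ∑ a ∈ s k, f a) : ∑' a, f a = ⊤ := by
  rw [← top_le_iff, ← ENNReal.tsum_const_eq_top_of_ne_zero (α := ℕ) hε]
  refine ENNReal.tsum_le_of_sum_range_le fun N => ?_
  calc ∑ _k ∈ range N, ε ≤ ∑ k ∈ range N, ∑ a ∈ s k, f a := sum_le_sum fun k _ => h k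
    _ = ∑ a ∈ (range N).biUnion s, f a := (sum_biUnion (hs.set_pairwise _)).symm
    _ ≤ ∑' a, f a := ENNReal.sum_le_tsum _

theorem tsum_prod_mul_neg_sum_le_tsum_sum_eq_zero {X : Type*} [AddCommGroup X] [DecidableEq X]
    (r : ℕ) (f : X → ℝ≥0∞) :
    ∑' w : Fin r → X, (∏ l, f (w l)) * f (-∑ l, w l) ≤
      ∑' v : Fin (r + 1) → X, if ∑ l, v l = 0 then ∏ l, f (v l) else 0 := by
  have hinj : Injective fun w : Fin r → X => Fin.snoc (α := fun _ => X) w (-∑ l, w l) :=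
    fun w w' hw => by simpa only [Fin.init_snoc] using congrArg Fin.init hw
  refine le_of_eq_of_le (tsum_congr fun w => ?_) (ENNReal.tsum_comp_le_tsum_of_injective hinj _)
  simp [Fin.sum_univ_castSucc, Fin.prod_univ_castSucc]

theorem one_le_jpn {d : ℕ} (n : Fin d → ℤ) : 1 ≤ jpn n :=
  Real.one_le_sqrt.2 (le_add_of_nonneg_right (sum_nonneg fun _ _ => sq_nonneg _))

theorem jpn_pos {d : ℕ} (n : Fin d → ℤ) : 0 < jpn n :=
  one_pos.trans_le (one_le_jpn n)

theorem jpn_le_of_abs_le {d : ℕ} {n : Fin d → ℤ} {B : ℝ} (hB : 1 ≤ B)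
    (h : ∀ i, |(n i : ℝ)| ≤ B) : jpn n ≤ √(1 + d) * B := by
  rw [← Real.sqrt_sq (zero_le_one.trans hB), ← Real.sqrt_mul (by positivity)]
  refine Real.sqrt_le_sqrt ?_
  have hsum : ∑ i, (n i : ℝ) ^ 2 ≤ d * B ^ 2 := by
    simpa using sum_le_sum (s := univ) fun i _ =>
      sq_le_sq' (neg_le_of_abs_le (h i)) (le_of_abs_le (h i))
  nlinarith

theorem rpow_le_jpn_rpow {d : ℕ} {n : Fin d → ℤ} {R γ s : ℝ} (hR : jpn n ≤ R) (hγ : 0 ≤ γ)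
    (hs : -γ ≤ s) : R ^ (-γ) ≤ jpn n ^ s :=
  (Real.rpow_le_rpow_of_nonpos (jpn_pos n) hR (neg_nonpos.2 hγ)).trans
    (Real.rpow_le_rpow_of_exponent_le (one_le_jpn n) hs)

noncomputable def dyadicShell (r d k : ℕ) : Finset (Fin r → Fin d → ℤ) :=
  Fintype.piFinset fun _ => Fintype.piFinset fun _ => Ico (2 ^ k) (2 ^ (k + 1))

theorem pairwise_disjoint_Ico_two_pow :
    Pairwise (Disjoint on fun k : ℕ => Ico (2 ^ k : ℤ) (2 ^ (k + 1))) := by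
  refine (pairwise_disjoint_on _).2 fun m n hmn => disjoint_left.2 fun x hxm hxn => ?_
  have : (2 : ℤ) ^ (m + 1) ≤ 2 ^ n := pow_le_pow_right₀ (by norm_num) hmn
  simp only [mem_Ico] at hxm hxn
  linarith

theorem pairwise_disjoint_dyadicShell {r d : ℕ} (hr : 0 < r) (hd : 0 < d) :
    Pairwise (Disjoint on dyadicShell r d) := fun _ _ hk =>
  Fintype.piFinset_disjoint_of_disjoint _ _ (a := ⟨0, hr⟩) <|
    Fintype.piFinset_disjoint_of_disjoint _ _ (a := ⟨0, hd⟩) (pairwise_disjoint_Ico_two_pow hk)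

theorem card_dyadicShell (r d k : ℕ) : #(dyadicShell r d k) = (2 ^ k) ^ (d * r) := by
  have hIco : #(Ico (2 ^ k : ℤ) (2 ^ (k + 1))) = 2 ^ k := by
    rw [Int.card_Ico, pow_succ, mul_two, add_sub_cancel_right]
    exact_mod_cast Int.toNat_natCast (2 ^ k)
  rw [pow_mul]
  simp [dyadicShell, hIco]

theorem abs_le_of_mem_dyadicShell {r d k : ℕ} {w : Fin r → Fin d → ℤ}
    (hw : w ∈ dyadicShell r d k) (l : Fin r) (i : Fin d) : |(w l i : ℝ)| ≤ 2 ^ (k + 1) := by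
  have hmem := mem_Ico.1 (Fintype.mem_piFinset.1 (Fintype.mem_piFinset.1 hw l) i)
  rw [abs_of_nonneg (by exact_mod_cast (pow_nonneg zero_le_two k).trans hmem.1)]
  exact_mod_cast hmem.2.le

theorem abs_neg_sum_le_of_mem_dyadicShell {r d k : ℕ} {w : Fin r → Fin d → ℤ}
    (hw : w ∈ dyadicShell r d k) (i : Fin d) :
    |(((-∑ l, w l) i : ℤ) : ℝ)| ≤ r * 2 ^ (k + 1) := by
  simp only [Pi.neg_apply, Finset.sum_apply, Int.cast_neg, Int.cast_sum, abs_neg]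
  calc |∑ l, (w l i : ℝ)| ≤ ∑ l, |(w l i : ℝ)| := abs_sum_le_sum_abs _ _
    _ ≤ ∑ _l : Fin r, (2 : ℝ) ^ (k + 1) :=
      sum_le_sum fun l _ => abs_le_of_mem_dyadicShell hw l i
    _ = r * 2 ^ (k + 1) := by simp

theorem rpow_neg_le_pow_mul_rpow_neg {C N γ : ℝ} {m j : ℕ} (hC : 0 < C) (hN : 1 ≤ N)
    (h : γ * j ≤ m) : C ^ (-(γ * j)) ≤ N ^ m * ((C * N) ^ (-γ)) ^ j := by
  have hN₀ : 0 < N := one_pos.trans_le hN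
  have hNpow : 1 ≤ N ^ m * N ^ (-(γ * j)) := by
    rw [← Real.rpow_natCast, ← Real.rpow_add hN₀]
    exact Real.one_le_rpow hN (by linarith)
  calc C ^ (-(γ * j)) ≤ C ^ (-(γ * j)) * (N ^ m * N ^ (-(γ * j))) :=
        le_mul_of_one_le_right (by positivity) hNpow
    _ = N ^ m * ((C * N) ^ (-γ)) ^ j := by
        rw [← Real.rpow_natCast ((C * N) ^ (-γ)), ← Real.rpow_mul (by positivity),
          Real.mul_rpow hC.le hN₀.le, neg_mul]
        ring

theorem rpow_neg_le_sum_dyadicShell {r d : ℕ} {γ s : ℝ} (hγ : 0 ≤ γ) (hs : -γ ≤ s)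
    (hγrd : γ * (r + 1) ≤ r * d) (k : ℕ) :
    ENNReal.ofReal ((√(1 + d) * (2 * (r + 1))) ^ (-(γ * (r + 1)))) ≤
      ∑ w ∈ dyadicShell r d k,
        (∏ l, ENNReal.ofReal (jpn (w l) ^ s)) * ENNReal.ofReal (jpn (-∑ l, w l) ^ s) := by
  set C := √(1 + d) * (2 * (r + 1))
  have hC : 0 < C := by positivity
  set x := (C * 2 ^ k) ^ (-γ)
  have hjpn : ∀ n : Fin d → ℤ, (∀ i, |(n i : ℝ)| ≤ (r + 1) * 2 ^ (k + 1)) →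
      ENNReal.ofReal x ≤ ENNReal.ofReal (jpn n ^ s) := fun n hn => by
    refine ENNReal.ofReal_le_ofReal (rpow_le_jpn_rpow ?_ hγ hs)
    calc jpn n ≤ √(1 + d) * ((r + 1) * 2 ^ (k + 1)) :=
          jpn_le_of_abs_le (one_le_mul_of_one_le_of_one_le (by linarith [r.cast_nonneg (α := ℝ)])
            (one_le_pow₀ one_le_two)) hn
      _ = C * 2 ^ k := by ring
  have hterm : ∀ w ∈ dyadicShell r d k, ENNReal.ofReal x ^ (r + 1) ≤
      (∏ l, ENNReal.ofReal (jpn (w l) ^ s)) * ENNReal.ofReal (jpn (-∑ l, w l) ^ s) := by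
    intro w hw
    rw [pow_succ, ← Fin.prod_const]
    refine mul_le_mul' (prod_le_prod' fun l _ => hjpn _ fun i => ?_) (hjpn _ fun i => ?_)
    · nlinarith [abs_le_of_mem_dyadicShell hw l i, r.cast_nonneg (α := ℝ),
        pow_pos (two_pos (α := ℝ)) (k + 1)]
    · nlinarith [abs_neg_sum_le_of_mem_dyadicShell hw i, pow_pos (two_pos (α := ℝ)) (k + 1)]
  have hreal : C ^ (-(γ * (r + 1))) ≤ ((2 : ℝ) ^ k) ^ (d * r) * x ^ (r + 1) := by
    have := rpow_neg_le_pow_mul_rpow_neg (N := 2 ^ k) (γ := γ) (m := d * r) (j := r + 1) hC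
      (one_le_pow₀ one_le_two) (by push_cast; linarith)
    push_cast at this
    exact this
  calc ENNReal.ofReal (C ^ (-(γ * (r + 1))))
      ≤ ENNReal.ofReal (((2 : ℝ) ^ k) ^ (d * r) * x ^ (r + 1)) := ENNReal.ofReal_le_ofReal hreal
    _ = #(dyadicShell r d k) • ENNReal.ofReal x ^ (r + 1) := by
        rw [card_dyadicShell, nsmul_eq_mul, ENNReal.ofReal_mul (by positivity),
          ENNReal.ofReal_pow (by positivity : 0 ≤ x)]
        norm_cast
    _ ≤ _ := card_nsmul_le_sum _ _ _ hterm

/-- the necessary condition `2j(1+α) > (j-1)d` for (Z8a): if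
`2j(1+α) ≤ (j-1)d`, then `∑_{n₁+⋯+n_j = 0} ⟨n₁⟩^{-2(1+α)} ⋯ ⟨n_j⟩^{-2(1+α)} = ∞`. -/
theorem stmt11 (d j : ℕ) (hd : 1 ≤ d) (hj : 2 ≤ j) (α : ℝ)
    (h : 2 * (j : ℝ) * (1 + α) ≤ ((j : ℝ) - 1) * (d : ℝ)) :
    (∑' v : Fin j → (Fin d → ℤ),
      (if (∑ l, v l) = 0
       then ∏ l, ENNReal.ofReal (jpn (v l) ^ (-2 * (1 + α)))
       else 0)) = ⊤ := by
  obtain ⟨r, rfl⟩ : ∃ r, j = r + 1 := ⟨j - 1, by omega⟩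
  set γ := max (2 * (1 + α)) 0
  have hγ : 0 ≤ γ := le_max_right _ _
  have hs : -γ ≤ -2 * (1 + α) := by linarith [le_max_left (2 * (1 + α)) 0]
  have hγrd : γ * (r + 1) ≤ r * d := by
    push_cast at h
    rw [max_mul_of_nonneg _ _ (by positivity), zero_mul]
    exact max_le (by linarith) (by positivity)
  have hshells : ∑' w : Fin r → Fin d → ℤ,
      (∏ l, ENNReal.ofReal (jpn (w l) ^ (-2 * (1 + α)))) *
        ENNReal.ofReal (jpn (-∑ l, w l) ^ (-2 * (1 + α))) = ⊤ :=
    ENNReal.tsum_eq_top_of_pairwise_disjoint (pairwise_disjoint_dyadicShell (by omega) hd)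
      (ENNReal.ofReal_pos.2 (by positivity)).ne' (rpow_neg_le_sum_dyadicShell hγ hs hγrd)
  exact top_le_iff.1 (hshells ▸ tsum_prod_mul_neg_sum_le_tsum_sum_eq_zero r
    fun n => ENNReal.ofReal (jpn n ^ (-2 * (1 + α))))
end

section
/- Let d ≥ 1 and j ≥ 2 be integers, let ã : ℤ → [0,∞) be any even sequence (ã_{-k} = ã_k for all k ∈ ℤ), and set a_n = ã_{n⁽¹⁾}⋯ã_{n⁽ᵈ⁾} for n = (n⁽¹⁾,…,n⁽ᵈ⁾) ∈ ℤ^d. Then for every natural number N, ∑_{(n_1,…,n_j) ∈ (ℤ^d)^j, |n_ℓ| ≤ N for all ℓ, n_1+⋯+n_j = 0} ∏_{ℓ=1}^{j} a_{n_ℓ}^2 ≥ ∏_{i=1}^{d} ( ∑ ( ∏_{ℓ=1}^{j-1} ã_{k_ℓ}^2 ) · ã_{k_1+⋯+k_{j-1}}^2 ), where the inner sum on the right-hand side is over all integer tuples (k_1, …, k_{j-1}) with 0 ≤ k_1 ≤ k_2 ≤ ⋯ ≤ k_{j-1} and k_1 + k_2 + ⋯ + k_{j-1} ≤ N/√d.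 -/
open scoped ENNReal Classical

/-!
Appending `-(k₁ + ⋯ + k_{j-1})` to an ordered nonnegative tuple with `k₁ + ⋯ + k_{j-1} ≤ N/√d`
gives a zero-sum `j`-tuple of integers of absolute value at most `N/√d`, and by evenness of `ã`
its weight `∏ ã²` is the one-dimensional summand. Doing this independently in each of the `d`
coordinates maps `d`-tuples of one-dimensional tuples injectively to zero-sum `j`-tuples of lattice
points of norm at most `√d · N/√d = N`, whose weight is the product of the one-dimensional weights.
Hence the `d`-th power of the one-dimensional sum is a subsum of the `d`-dimensional one.
-/

theorem ENNReal.tsum_pow_eq_tsum_prod {α : Type*} (f : α → ℝ≥0∞) (n : ℕ) :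
    (∑' x, f x) ^ n = ∑' g : Fin n → α, ∏ i, f (g i) := by
  induction n with
  | zero => simp
  | succ n ih =>
    rw [pow_succ', ih, ← ENNReal.tsum_mul_right, ← (Fin.consEquiv fun _ => α).tsum_eq,
      ENNReal.tsum_prod']
    simp [Fin.prod_univ_succ, Fin.consEquiv, ENNReal.tsum_mul_left]

theorem Real.sqrt_sum_sq_le_of_forall_abs_le {ι : Type*} [Fintype ι] (x : ι → ℝ) {B : ℝ}
    (hB : 0 ≤ B) (hx : ∀ i, |x i| ≤ B / √(Fintype.card ι)) : √(∑ i, x i ^ 2) ≤ B := by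
  have hc : (0 : ℝ) ≤ Fintype.card ι := Nat.cast_nonneg _
  refine Real.sqrt_le_iff.2 ⟨hB, ?_⟩
  calc ∑ i, x i ^ 2 ≤ ∑ _i : ι, (B / √(Fintype.card ι)) ^ 2 :=
        Finset.sum_le_sum fun i _ => sq_le_sq' (neg_le_of_abs_le (hx i)) (le_of_abs_le (hx i))
    _ = Fintype.card ι * (B ^ 2 / Fintype.card ι) := by
        rw [Finset.sum_const, Finset.card_univ, nsmul_eq_mul, div_pow, Real.sq_sqrt hc]
    _ ≤ B ^ 2 := by
        rcases hc.eq_or_lt with h | h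
        · rw [← h]; simp [sq_nonneg]
        · rw [mul_div_cancel₀ _ h.ne']

def completeToZeroSum {G : Type*} [AddCommGroup G] {m : ℕ} (k : Fin m → G) : Fin (m + 1) → G :=
  Fin.snoc k (-∑ l, k l)

section completeToZeroSum
variable {G : Type*} [AddCommGroup G] {m : ℕ}

theorem sum_completeToZeroSum (k : Fin m → G) : ∑ l, completeToZeroSum k l = 0 := by
  simp [completeToZeroSum, Fin.sum_univ_castSucc]

theorem completeToZeroSum_injective : Function.Injective (completeToZeroSum : (Fin m → G) → _) :=
  fun k k' h => funext fun l => by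
    simpa [completeToZeroSum] using congrFun h l.castSucc

theorem prod_completeToZeroSum {M : Type*} [CommMonoid M] {f : G → M} (hf : ∀ x, f (-x) = f x)
    (k : Fin m → G) : ∏ l, f (completeToZeroSum k l) = (∏ l, f (k l)) * f (∑ l, k l) := by
  simp [completeToZeroSum, Fin.prod_univ_castSucc, hf]

theorem abs_completeToZeroSum_le [LinearOrder G] [IsOrderedAddMonoid G] {k : Fin m → G}
    (hk : ∀ l, 0 ≤ k l) (l : Fin (m + 1)) :
    |completeToZeroSum k l| ≤ ∑ l, k l := by
  induction l using Fin.lastCases with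
  | last =>
    simpa [completeToZeroSum] using (abs_of_nonneg (Finset.sum_nonneg fun l _ => hk l)).le
  | cast l =>
    simpa [completeToZeroSum, abs_of_nonneg (hk l)] using
      Finset.single_le_sum (fun l _ => hk l) (Finset.mem_univ l)

end completeToZeroSum

noncomputable def orderedWeight (a : ℤ → ℝ) (B : ℝ) {m : ℕ} (k : Fin m → ℤ) : ℝ≥0∞ :=
  if (∀ l, 0 ≤ k l) ∧ Monotone k ∧ (((∑ l, k l : ℤ) : ℝ) ≤ B)
  then ENNReal.ofReal ((∏ l, (a (k l)) ^ 2) * (a (∑ l, k l)) ^ 2)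
  else 0

noncomputable def zeroSumWeight (a : ℤ → ℝ) (N : ℝ) {j d : ℕ} (v : Fin j → Fin d → ℤ) : ℝ≥0∞ :=
  if (∀ l, Real.sqrt (∑ i, ((v l i : ℝ)) ^ 2) ≤ N) ∧ (∑ l, v l) = 0
  then ENNReal.ofReal (∏ l, (∏ i, a (v l i)) ^ 2)
  else 0

theorem prod_orderedWeight_le_zeroSumWeight {a : ℤ → ℝ} (ha : ∀ k, a (-k) = a k) {N : ℝ}
    (hN : 0 ≤ N) {d m : ℕ} (K : Fin d → Fin m → ℤ) :
    ∏ i, orderedWeight a (N / √d) (K i) ≤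
      zeroSumWeight a N fun l i => completeToZeroSum (K i) l := by
  by_cases hK : ∀ i, (∀ l, 0 ≤ K i l) ∧ Monotone (K i) ∧ ((∑ l, K i l : ℤ) : ℝ) ≤ N / √d
  · have hnorm : ∀ l, √(∑ i, ((completeToZeroSum (K i) l : ℤ) : ℝ) ^ 2) ≤ N := fun l =>
      Real.sqrt_sum_sq_le_of_forall_abs_le _ hN fun i => by
        rw [Fintype.card_fin, ← Int.cast_abs]
        exact (Int.cast_le.2 (abs_completeToZeroSum_le (hK i).1 l)).trans (hK i).2.2
    have hsum : ∑ l, (fun i => completeToZeroSum (K i) l) = 0 :=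
      funext fun i => by simp [Finset.sum_apply, sum_completeToZeroSum]
    simp only [orderedWeight, zeroSumWeight, if_pos (hK _), if_pos (And.intro hnorm hsum)]
    rw [← ENNReal.ofReal_prod_of_nonneg fun i _ => by positivity]
    refine le_of_eq (congrArg ENNReal.ofReal ?_)
    simp_rw [← Finset.prod_pow]
    rw [Finset.prod_comm]
    exact Finset.prod_congr rfl fun i _ =>
      (prod_completeToZeroSum (f := fun x => a x ^ 2) (by simp [ha]) (K i)).symm
  · push Not at hK
    obtain ⟨i, hi⟩ := hK
    have : orderedWeight a (N / √d) (K i) = 0 := if_neg fun h => (hi h.1 h.2.1).not_ge h.2.2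
    rw [Finset.prod_eq_zero (Finset.mem_univ i) this]
    exact zero_le

theorem stmt12_general (d j : ℕ) (hj : 2 ≤ j)
    (atl : ℤ → ℝ) (heven : ∀ k : ℤ, atl (-k) = atl k) (N : ℕ) :
    (∑' k : Fin (j - 1) → ℤ,
        (if (∀ l, 0 ≤ k l) ∧ Monotone k ∧ (((∑ l, k l : ℤ) : ℝ) ≤ (N : ℝ) / Real.sqrt d)
         then ENNReal.ofReal ((∏ l, (atl (k l)) ^ 2) * (atl (∑ l, k l)) ^ 2)
         else 0)) ^ d ≤
      ∑' v : Fin j → (Fin d → ℤ),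
        (if (∀ l, Real.sqrt (∑ i, ((v l i : ℝ)) ^ 2) ≤ (N : ℝ)) ∧ (∑ l, v l) = 0
         then ENNReal.ofReal (∏ l, (∏ i, atl (v l i)) ^ 2)
         else 0) := by
  obtain ⟨m, rfl⟩ : ∃ m, j = m + 1 := ⟨j - 1, by omega⟩
  rw [Nat.add_sub_cancel]
  change (∑' k : Fin m → ℤ, orderedWeight atl (N / √d) k) ^ d ≤ ∑' v, zeroSumWeight atl N v
  have hinj : Function.Injective fun (K : Fin d → Fin m → ℤ) l i => completeToZeroSum (K i) l :=
    fun K K' h => funext fun i =>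
      completeToZeroSum_injective (funext fun l => congrFun (congrFun h l) i)
  rw [ENNReal.tsum_pow_eq_tsum_prod]
  calc ∑' K : Fin d → Fin m → ℤ, ∏ i, orderedWeight atl (N / √d) (K i)
      _ ≤ ∑' K : Fin d → Fin m → ℤ, zeroSumWeight atl N fun l i => completeToZeroSum (K i) l :=
        ENNReal.tsum_le_tsum fun K => prod_orderedWeight_le_zeroSumWeight heven N.cast_nonneg K
      _ ≤ ∑' v, zeroSumWeight atl N v := ENNReal.tsum_comp_le_tsum_of_injective hinj _

/-- the tensorization lower bound (Z18)–(Z18b): for any even nonnegative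
sequence `atl : ℤ → [0,∞)` with associated tensor sequence `a_n = atl_{n⁽¹⁾} ⋯ atl_{n⁽ᵈ⁾}`,
the zero-frequency `j`-fold autocorrelation sum over `|n_ℓ| ≤ N` is bounded below by the
`d`-th power of the one-dimensional sum over ordered nonnegative tuples
`0 ≤ k₁ ≤ ⋯ ≤ k_{j-1}` with `k₁ + ⋯ + k_{j-1} ≤ N/√d`. -/
theorem stmt12 (d j : ℕ) (hd : 1 ≤ d) (hj : 2 ≤ j)
    (atl : ℤ → ℝ) (hpos : ∀ k, 0 ≤ atl k) (heven : ∀ k : ℤ, atl (-k) = atl k) (N : ℕ) :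
    (∑' k : Fin (j - 1) → ℤ,
        (if (∀ l, 0 ≤ k l) ∧ Monotone k ∧ (((∑ l, k l : ℤ) : ℝ) ≤ (N : ℝ) / Real.sqrt d)
         then ENNReal.ofReal ((∏ l, (atl (k l)) ^ 2) * (atl (∑ l, k l)) ^ 2)
         else 0)) ^ d ≤
      ∑' v : Fin j → (Fin d → ℤ),
        (if (∀ l, Real.sqrt (∑ i, ((v l i : ℝ)) ^ 2) ≤ (N : ℝ)) ∧ (∑ l, v l) = 0
         then ENNReal.ofReal (∏ l, (∏ i, atl (v l i)) ^ 2)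
         else 0) :=
  stmt12_general d j hj atl heven N
end
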